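/- Assume the insertion setup, assume K is a simple lattice, and assume that for every x ∈ L with x < a one has cg_L(x,a) = ∇_L and for every y ∈ L with b < y one has cg_L(b,y) = ∇_L. Then Princ M is order-isomorphic to Princ L. -/

import Mathlib

/-- A congruence of a lattice: an equivalence relation compatible with `⊔` and `⊓`. -/
structure LatCon (L : Type*) [Lattice L] where
  rel : L → L → Prop
  refl : ∀ x, rel x x
  symm : ∀ {x y}, rel x y → rel y x
  trans : ∀ {x y z}, rel x y → rel y z → rel x z
  sup : ∀ {x₁ y₁ x₂ y₂}, rel x₁ y₁ → rel x₂ y₂ → rel (x₁ ⊔ x₂) (y₁ ⊔ y₂)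
  inf : ∀ {x₁ y₁ x₂ y₂}, rel x₁ y₁ → rel x₂ y₂ → rel (x₁ ⊓ x₂) (y₁ ⊓ y₂)

/-- The principal congruence `cg(a,b)`: the smallest congruence collapsing `a` and `b`. -/
def latCg {L : Type*} [Lattice L] (a b : L) : L → L → Prop :=
  fun x y => ∀ θ : LatCon L, θ.rel a b → θ.rel x y

/-- `Princ L`: the set of principal congruences of `L`, ordered by inclusion. -/
def Princ (L : Type*) [Lattice L] :=
  {r : L → L → Prop // ∃ a b : L, a ≤ b ∧ r = latCg a b}

instance (L : Type*) [Lattice L] : PartialOrder (Princ L) :=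
  Subtype.partialOrder _

/-- A lattice is simple if it has at least two elements and its only congruences
are the equality congruence `Δ` and the full congruence `∇`. -/
def IsSimpleLat (L : Type*) [Lattice L] : Prop :=
  Nontrivial L ∧ ∀ θ : LatCon L, (∀ x y, θ.rel x y ↔ x = y) ∨ (∀ x y, θ.rel x y)

/-!
Every congruence `α` of `L` extends to a congruence of `M` restricting to `α`. If `α` collapses
`a` and `b`, pull it back along the map `M → L` that sends the interior of `K` to `a`; this map is
a homomorphism modulo `α`. Otherwise add the diagonal of `K` to `α`: this is compatible with `⊔`
and `⊓` because, by the hypotheses on `cg(x,a)` and `cg(b,y)`, such an `α` never relates an element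
below `a` to one that is not (nor dually for `b`). Hence `cg_M(c,d)` restricts to `cg_L(c,d)` for
`c, d ∈ L`. Conversely, as `K` is simple, a congruence of `M` collapsing `x < y` also collapses
`x` pushed down into `L` and `y` pushed up into `L`, so every principal congruence of `M` is
generated by a pair from `L`. Restriction is therefore an isomorphism `Princ M ≃o Princ L`.
-/

namespace LatCon

variable {α β : Type*} [Lattice α] [Lattice β]

def comap (Θ : LatCon β) (f : α → β) (hsup : ∀ x y, Θ.rel (f (x ⊔ y)) (f x ⊔ f y))
    (hinf : ∀ x y, Θ.rel (f (x ⊓ y)) (f x ⊓ f y)) : LatCon α where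
  rel x y := Θ.rel (f x) (f y)
  refl _ := Θ.refl _
  symm := Θ.symm
  trans := Θ.trans
  sup h h' := Θ.trans (hsup _ _) (Θ.trans (Θ.sup h h') (Θ.symm (hsup _ _)))
  inf h h' := Θ.trans (hinf _ _) (Θ.trans (Θ.inf h h') (Θ.symm (hinf _ _)))

theorem rel_sup_right (Θ : LatCon α) {x y : α} (h : Θ.rel x y) (z : α) :
    Θ.rel (x ⊔ z) (y ⊔ z) :=
  Θ.sup h (Θ.refl z)

theorem rel_inf_right (Θ : LatCon α) {x y : α} (h : Θ.rel x y) (z : α) :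
    Θ.rel (x ⊓ z) (y ⊓ z) :=
  Θ.inf h (Θ.refl z)

theorem rel_of_le_of_le (Θ : LatCon α) {c d x y : α} (h : Θ.rel c d) (hcx : c ≤ x)
    (hxy : x ≤ y) (hyd : y ≤ d) : Θ.rel x y := by
  have hx : Θ.rel x d := by
    simpa only [sup_eq_left.mpr hcx, sup_eq_right.mpr (hxy.trans hyd)] using Θ.sup (Θ.refl x) h
  have hy : Θ.rel y d := by
    simpa only [sup_eq_left.mpr (hcx.trans hxy), sup_eq_right.mpr hyd] using Θ.sup (Θ.refl y) h
  exact Θ.trans hx (Θ.symm hy)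

theorem rel_of_isSimpleLat_Icc {a b : α} (hK : IsSimpleLat (Set.Icc a b)) (Θ : LatCon α)
    {x y : α} (h : Θ.rel x y) (hx : x ∈ Set.Icc a b) (hy : y ∈ Set.Icc a b) (hxy : x ≠ y) :
    Θ.rel a b := by
  have hab : a ≤ b := hx.1.trans hx.2
  let ΘK := Θ.comap (Subtype.val : Set.Icc a b → α) (fun _ _ => Θ.refl _) fun _ _ => Θ.refl _
  rcases hK.2 ΘK with hΔ | hΘK
  · exact absurd (Subtype.ext_iff.mp ((hΔ ⟨x, hx⟩ ⟨y, hy⟩).mp h)) hxy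
  · exact hΘK ⟨a, le_rfl, hab⟩ ⟨b, hab, le_rfl⟩

end LatCon

section latCg

variable {α : Type*} [Lattice α]

theorem latCg_rel_self (a b : α) : latCg a b a b := fun _ h => h

theorem latCg_le_of_latCg {a b c d : α} (h : latCg c d a b) : latCg a b ≤ latCg c d :=
  fun _ _ hxy Θ hΘ => hxy Θ (h Θ hΘ)

theorem latCg_eq_latCg {a b c d : α} (h : ∀ Θ : LatCon α, Θ.rel a b ↔ Θ.rel c d) :
    latCg a b = latCg c d := by
  funext x y
  exact propext ⟨fun hxy Θ hΘ => hxy Θ ((h Θ).mpr hΘ), fun hxy Θ hΘ => hxy Θ ((h Θ).mp hΘ)⟩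

end latCg

namespace Sublattice

variable {M : Type*} [Lattice M]

def HasCongruenceExtension (L : Sublattice M) : Prop :=
  ∀ α : LatCon L, ∃ Θ : LatCon M, ∀ u v : L, Θ.rel u v ↔ α.rel u v

theorem HasCongruenceExtension.latCg_coe {L : Sublattice M} (hL : L.HasCongruenceExtension)
    (c d : L) : (fun u v : L => latCg (c : M) d u v) = latCg c d := by
  funext u v
  refine propext ⟨fun h α hα => ?_, fun h Θ hΘ => ?_⟩
  · obtain ⟨Θ, hΘ⟩ := hL α
    exact (hΘ u v).mp (h Θ ((hΘ c d).mpr hα))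
  · exact h (Θ.comap ((↑) : L → M) (fun _ _ => Θ.refl _) fun _ _ => Θ.refl _) hΘ

end Sublattice

namespace Princ

variable {M : Type*} [Lattice M] {L : Sublattice M} (hL : L.HasCongruenceExtension)
  (hgen : ∀ x y : M, x ≤ y → ∃ c d : L, c ≤ d ∧ latCg x y = latCg (c : M) d)
include hL hgen

def restrict (r : Princ M) : Princ L :=
  ⟨fun u v => r.1 u v, by
    obtain ⟨x, y, hxy, hr⟩ := r.2
    obtain ⟨c, d, hcd, hxy_cd⟩ := hgen x y hxy
    exact ⟨c, d, hcd, by rw [hr, hxy_cd, hL.latCg_coe]⟩⟩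

theorem restrict_le_restrict_iff (r s : Princ M) :
    restrict hL hgen r ≤ restrict hL hgen s ↔ r ≤ s := by
  refine ⟨fun h => ?_, fun h u v => h u v⟩
  obtain ⟨x, y, hxy, hr⟩ := r.2
  obtain ⟨c, d, -, hxy_cd⟩ := hgen x y hxy
  obtain ⟨x', y', -, hs⟩ := s.2
  have hr_cd : r.1 = latCg (c : M) d := hr.trans hxy_cd
  have hs_cd : latCg x' y' (c : M) d := by
    rw [← hs]
    exact h c d (show r.1 c d by rw [hr_cd]; exact latCg_rel_self _ _)
  show r.1 ≤ s.1
  rw [hr_cd, hs]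
  exact latCg_le_of_latCg hs_cd

theorem restrict_surjective : Function.Surjective (restrict hL hgen) := by
  rintro ⟨ρ, c, d, hcd, rfl⟩
  exact ⟨⟨latCg (c : M) d, c, d, hcd, rfl⟩, Subtype.ext (hL.latCg_coe c d)⟩

noncomputable def orderIsoOfSublattice : Princ M ≃o Princ L :=
  OrderIso.ofSurjective (OrderEmbedding.ofMapLEIff _ (restrict_le_restrict_iff hL hgen))
    (restrict_surjective hL hgen)

end Princ

structure IsInsertion {M : Type*} [Lattice M] (a b : M) (L : Sublattice M) : Prop where
  lt : a < b
  left_mem : a ∈ L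
  right_mem : b ∈ L
  mem_or_mem_Icc : ∀ x : M, x ∈ L ∨ x ∈ Set.Icc a b
  inter_Icc : (L : Set M) ∩ Set.Icc a b = {a, b}
  le_iff : ∀ k ∈ Set.Icc a b, ∀ l ∈ (L : Set M) \ Set.Icc a b,
    (k ≤ l ↔ b ≤ l ∨ (k = a ∧ a ≤ l)) ∧ (l ≤ k ↔ l ≤ a ∨ (k = b ∧ l ≤ b))

namespace IsInsertion

variable {M : Type*} [Lattice M] {a b : M} {L : Sublattice M} (S : IsInsertion a b L)
include S

protected def aL : L := ⟨a, S.left_mem⟩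

protected def bL : L := ⟨b, S.right_mem⟩

theorem aL_lt_bL : S.aL < S.bL := S.lt

theorem lt_and_lt_of_not_mem {x : M} (hx : x ∉ L) : a < x ∧ x < b := by
  rcases S.mem_or_mem_Icc x with h | ⟨hax, hxb⟩
  · exact absurd h hx
  · exact ⟨hax.lt_of_ne (by rintro rfl; exact hx S.left_mem),
      hxb.lt_of_ne (by rintro rfl; exact hx S.right_mem)⟩

theorem eq_or_eq_of_mem_Icc {x : M} (hx : x ∈ L) (hxK : x ∈ Set.Icc a b) : x = a ∨ x = b := by
  have h : x ∈ (L : Set M) ∩ Set.Icc a b := ⟨hx, hxK⟩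
  rwa [S.inter_Icc] at h

theorem right_le_of_le {k l : M} (hk : k ∉ L) (hl : l ∈ L) (hkl : k ≤ l) : b ≤ l := by
  obtain ⟨hak, hkb⟩ := S.lt_and_lt_of_not_mem hk
  by_cases hlK : l ∈ Set.Icc a b
  · rcases S.eq_or_eq_of_mem_Icc hl hlK with rfl | rfl
    · exact absurd hkl hak.not_ge
    · exact le_rfl
  · rcases ((S.le_iff k ⟨hak.le, hkb.le⟩ l ⟨hl, hlK⟩).1.mp hkl) with h | ⟨rfl, -⟩
    · exact h
    · exact absurd S.left_mem hk

theorem le_left_of_le {k l : M} (hk : k ∉ L) (hl : l ∈ L) (hlk : l ≤ k) : l ≤ a := by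
  obtain ⟨hak, hkb⟩ := S.lt_and_lt_of_not_mem hk
  by_cases hlK : l ∈ Set.Icc a b
  · rcases S.eq_or_eq_of_mem_Icc hl hlK with rfl | rfl
    · exact le_rfl
    · exact absurd hlk hkb.not_ge
  · rcases ((S.le_iff k ⟨hak.le, hkb.le⟩ l ⟨hl, hlK⟩).2.mp hlk) with h | ⟨rfl, -⟩
    · exact h
    · exact absurd S.right_mem hk

theorem sup_eq_right_sup {x l : M} (hx : x ∉ L) (hl : l ∈ L) (hla : ¬ l ≤ a) :
    x ⊔ l = b ⊔ l := by
  have hb : b ≤ x ⊔ l := by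
    by_cases hs : x ⊔ l ∈ L
    · exact S.right_le_of_le hx hs le_sup_left
    · exact absurd (S.le_left_of_le hs hl le_sup_right) hla
  exact le_antisymm (sup_le_sup_right (S.lt_and_lt_of_not_mem hx).2.le l)
    (sup_le hb le_sup_right)

theorem inf_eq_left_inf {x l : M} (hx : x ∉ L) (hl : l ∈ L) (hbl : ¬ b ≤ l) :
    x ⊓ l = a ⊓ l := by
  have ha : x ⊓ l ≤ a := by
    by_cases hs : x ⊓ l ∈ L
    · exact S.le_left_of_le hx hs inf_le_left
    · exact absurd (S.right_le_of_le hs hl inf_le_right) hbl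
  exact le_antisymm (le_inf ha inf_le_right)
    (inf_le_inf_right l (S.lt_and_lt_of_not_mem hx).1.le)

theorem rel_aL_bL_of_rel_aL (hcgb : ∀ y : L, S.bL < y → ∀ u v : L, latCg S.bL y u v)
    (α : LatCon L) {l : L} (h : α.rel S.aL l) (hl : S.aL < l) : α.rel S.aL S.bL := by
  have hmem : ((l ⊓ S.bL : L) : M) ∈ Set.Icc a b := ⟨le_inf hl.le S.lt.le, inf_le_right⟩
  rcases S.eq_or_eq_of_mem_Icc (l ⊓ S.bL).2 hmem with he | he
  · have hlt : S.bL < l ⊔ S.bL := by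
      refine le_sup_right.lt_of_ne fun hBl => hl.ne' (Subtype.ext ?_)
      rwa [inf_eq_left.mpr (le_sup_left.trans hBl.ge)] at he
    have hrel : α.rel S.bL (l ⊔ S.bL) := by
      simpa only [sup_eq_right.mpr S.aL_lt_bL.le] using α.rel_sup_right h S.bL
    exact hcgb _ hlt S.aL S.bL α hrel
  · simpa only [inf_eq_left.mpr S.aL_lt_bL.le, show l ⊓ S.bL = S.bL from Subtype.ext he]
      using α.rel_inf_right h S.bL

theorem rel_aL_bL_of_rel_bL (hcga : ∀ x : L, x < S.aL → ∀ u v : L, latCg x S.aL u v)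
    (α : LatCon L) {l : L} (h : α.rel l S.bL) (hl : l < S.bL) : α.rel S.aL S.bL := by
  have hmem : ((l ⊔ S.aL : L) : M) ∈ Set.Icc a b := ⟨le_sup_right, sup_le hl.le S.lt.le⟩
  rcases S.eq_or_eq_of_mem_Icc (l ⊔ S.aL).2 hmem with he | he
  · simpa only [sup_eq_left.mpr S.aL_lt_bL.le, show l ⊔ S.aL = S.aL from Subtype.ext he]
      using α.rel_sup_right h S.aL
  · have hlt : l ⊓ S.aL < S.aL := by
      refine inf_le_right.lt_of_ne fun hAl => hl.ne (Subtype.ext ?_)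
      rwa [sup_eq_left.mpr (hAl.ge.trans inf_le_left)] at he
    have hrel : α.rel (l ⊓ S.aL) S.aL := by
      simpa only [inf_eq_right.mpr S.aL_lt_bL.le] using α.rel_inf_right h S.aL
    exact hcga _ hlt S.aL S.bL α hrel

theorem rel_aL_bL_of_rel_of_le_aL (hcgb : ∀ y : L, S.bL < y → ∀ u v : L, latCg S.bL y u v)
    (α : LatCon L) {u v : L} (h : α.rel u v) (hu : u ≤ S.aL) (hv : ¬ v ≤ S.aL) :
    α.rel S.aL S.bL := by
  refine S.rel_aL_bL_of_rel_aL hcgb α (l := v ⊔ S.aL) ?_ ?_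
  · simpa only [sup_eq_right.mpr hu] using α.rel_sup_right h S.aL
  · exact le_sup_right.lt_of_ne fun he => hv (le_sup_left.trans he.ge)

theorem rel_aL_bL_of_rel_of_bL_le (hcga : ∀ x : L, x < S.aL → ∀ u v : L, latCg x S.aL u v)
    (α : LatCon L) {u v : L} (h : α.rel u v) (hu : S.bL ≤ u) (hv : ¬ S.bL ≤ v) :
    α.rel S.aL S.bL := by
  refine S.rel_aL_bL_of_rel_bL hcga α (l := v ⊓ S.bL) ?_ ?_
  · simpa only [inf_eq_right.mpr hu] using α.symm (α.rel_inf_right h S.bL)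
  · exact inf_le_right.lt_of_ne fun he => hv (he.ge.trans inf_le_left)

open Classical in
noncomputable def lower (x : M) : L := if h : x ∈ L then ⟨x, h⟩ else S.aL

open Classical in
noncomputable def upper (x : M) : L := if h : x ∈ L then ⟨x, h⟩ else S.bL

theorem lower_of_mem {x : M} (hx : x ∈ L) : S.lower x = ⟨x, hx⟩ := dif_pos hx

theorem lower_of_not_mem {x : M} (hx : x ∉ L) : S.lower x = S.aL := dif_neg hx

theorem upper_of_mem {y : M} (hy : y ∈ L) : S.upper y = ⟨y, hy⟩ := dif_pos hy

theorem upper_of_not_mem {y : M} (hy : y ∉ L) : S.upper y = S.bL := dif_neg hy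

theorem lower_coe (u : L) : S.lower u = u := S.lower_of_mem u.2

theorem lower_le (x : M) : (S.lower x : M) ≤ x := by
  by_cases hx : x ∈ L
  · rw [S.lower_of_mem hx]
  · rw [S.lower_of_not_mem hx]
    exact (S.lt_and_lt_of_not_mem hx).1.le

theorem le_upper (y : M) : y ≤ S.upper y := by
  by_cases hy : y ∈ L
  · rw [S.upper_of_mem hy]
  · rw [S.upper_of_not_mem hy]
    exact (S.lt_and_lt_of_not_mem hy).2.le

theorem lower_inf_of_not_mem {x y : M} (hx : x ∉ L) (hy : y ∈ L) :
    S.lower (x ⊓ y) = S.lower x ⊓ S.lower y := by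
  rw [S.lower_of_not_mem hx, S.lower_of_mem hy]
  by_cases hby : b ≤ y
  · rw [inf_eq_left.mpr ((S.lt_and_lt_of_not_mem hx).2.le.trans hby), S.lower_of_not_mem hx]
    exact (inf_eq_left.mpr (S.aL_lt_bL.le.trans (show S.bL ≤ ⟨y, hy⟩ from hby))).symm
  · rw [S.inf_eq_left_inf hx hy hby, S.lower_of_mem (L.infClosed S.left_mem hy)]
    rfl

theorem lower_inf (x y : M) : S.lower (x ⊓ y) = S.lower x ⊓ S.lower y := by
  by_cases hx : x ∈ L <;> by_cases hy : y ∈ L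
  · rw [S.lower_of_mem hx, S.lower_of_mem hy, S.lower_of_mem (L.infClosed hx hy)]
    rfl
  · rw [inf_comm x, inf_comm (S.lower x)]
    exact S.lower_inf_of_not_mem hy hx
  · exact S.lower_inf_of_not_mem hx hy
  · have hxy : S.lower (x ⊓ y) = S.aL := by
      by_cases hs : x ⊓ y ∈ L
      · refine (S.lower_of_mem hs).trans (Subtype.ext (le_antisymm ?_ ?_))
        · exact S.le_left_of_le hx hs inf_le_left
        · exact le_inf (S.lt_and_lt_of_not_mem hx).1.le (S.lt_and_lt_of_not_mem hy).1.le
      · exact S.lower_of_not_mem hs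
    rw [hxy, S.lower_of_not_mem hx, S.lower_of_not_mem hy, inf_idem]

theorem rel_lower_sup_of_not_mem (α : LatCon L) (hα : α.rel S.aL S.bL) {x y : M} (hx : x ∉ L)
    (hy : y ∈ L) : α.rel (S.lower (x ⊔ y)) (S.lower x ⊔ S.lower y) := by
  rw [S.lower_of_not_mem hx, S.lower_of_mem hy]
  by_cases hya : y ≤ a
  · rw [sup_eq_left.mpr (hya.trans (S.lt_and_lt_of_not_mem hx).1.le), S.lower_of_not_mem hx,
      sup_eq_left.mpr (show ⟨y, hy⟩ ≤ S.aL from hya)]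
    exact α.refl _
  · rw [S.sup_eq_right_sup hx hy hya, S.lower_of_mem (L.supClosed S.right_mem hy)]
    exact α.rel_sup_right (α.symm hα) ⟨y, hy⟩

theorem rel_lower_sup (α : LatCon L) (hα : α.rel S.aL S.bL) (x y : M) :
    α.rel (S.lower (x ⊔ y)) (S.lower x ⊔ S.lower y) := by
  by_cases hx : x ∈ L <;> by_cases hy : y ∈ L
  · rw [S.lower_of_mem hx, S.lower_of_mem hy, S.lower_of_mem (L.supClosed hx hy)]
    exact α.refl _
  · rw [sup_comm x, sup_comm (S.lower x)]
    exact S.rel_lower_sup_of_not_mem α hα hy hx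
  · exact S.rel_lower_sup_of_not_mem α hα hx hy
  · rw [S.lower_of_not_mem hx, S.lower_of_not_mem hy, sup_idem]
    by_cases hs : x ⊔ y ∈ L
    · have hK : x ⊔ y ∈ Set.Icc a b := ⟨(S.lt_and_lt_of_not_mem hx).1.le.trans le_sup_left,
        sup_le (S.lt_and_lt_of_not_mem hx).2.le (S.lt_and_lt_of_not_mem hy).2.le⟩
      rw [S.lower_of_mem hs]
      rcases S.eq_or_eq_of_mem_Icc hs hK with h | h
      · exact (Subtype.ext h : (⟨x ⊔ y, hs⟩ : L) = S.aL) ▸ α.refl _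
      · exact (Subtype.ext h : (⟨x ⊔ y, hs⟩ : L) = S.bL) ▸ α.symm hα
    · rw [S.lower_of_not_mem hs]
      exact α.refl _

theorem exists_extension_of_rel (α : LatCon L) (hα : α.rel S.aL S.bL) :
    ∃ Θ : LatCon M, ∀ u v : L, Θ.rel u v ↔ α.rel u v := by
  refine ⟨α.comap S.lower (S.rel_lower_sup α hα) fun x y => ?_, fun u v => ?_⟩
  · rw [S.lower_inf]
    exact α.refl _
  · show α.rel (S.lower u) (S.lower v) ↔ α.rel u v
    rw [S.lower_coe, S.lower_coe]

omit S in
def extendRel (α : LatCon L) (x y : M) : Prop :=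
  x = y ∨ ∃ u v : L, (u : M) = x ∧ (v : M) = y ∧ α.rel u v

omit S in
theorem extendRel_symm (α : LatCon L) {x y : M} (hxy : extendRel α x y) : extendRel α y x := by
  rcases hxy with rfl | ⟨u, v, rfl, rfl, huv⟩
  exacts [Or.inl rfl, Or.inr ⟨v, u, rfl, rfl, α.symm huv⟩]

omit S in
theorem extendRel_trans (α : LatCon L) {x y z : M} (hxy : extendRel α x y)
    (hyz : extendRel α y z) : extendRel α x z := by
  rcases hxy with rfl | ⟨u, v, rfl, rfl, huv⟩
  · exact hyz
  rcases hyz with rfl | ⟨v', w, hv, rfl, hvw⟩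
  · exact Or.inr ⟨u, v, rfl, rfl, huv⟩
  obtain rfl := Subtype.ext hv
  exact Or.inr ⟨u, w, rfl, rfl, α.trans huv hvw⟩

theorem extendRel_sup_left (hcgb : ∀ y : L, S.bL < y → ∀ u v : L, latCg S.bL y u v)
    (α : LatCon L) (hα : ¬ α.rel S.aL S.bL) (z : M) {u v : L} (h : α.rel u v) :
    extendRel α (z ⊔ u) (z ⊔ v) := by
  by_cases hz : z ∈ L
  · exact Or.inr ⟨⟨z, hz⟩ ⊔ u, ⟨z, hz⟩ ⊔ v, rfl, rfl, α.sup (α.refl _) h⟩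
  have haz := (S.lt_and_lt_of_not_mem hz).1.le
  by_cases hua : u ≤ S.aL <;> by_cases hva : v ≤ S.aL
  · left
    rw [sup_eq_left.mpr ((show (u : M) ≤ a from hua).trans haz),
      sup_eq_left.mpr ((show (v : M) ≤ a from hva).trans haz)]
  · exact absurd (S.rel_aL_bL_of_rel_of_le_aL hcgb α h hua hva) hα
  · exact absurd (S.rel_aL_bL_of_rel_of_le_aL hcgb α (α.symm h) hva hua) hα
  · right
    refine ⟨S.bL ⊔ u, S.bL ⊔ v, ?_, ?_, α.sup (α.refl _) h⟩
    · exact (S.sup_eq_right_sup hz u.2 hua).symm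
    · exact (S.sup_eq_right_sup hz v.2 hva).symm

theorem extendRel_inf_left (hcga : ∀ x : L, x < S.aL → ∀ u v : L, latCg x S.aL u v)
    (α : LatCon L) (hα : ¬ α.rel S.aL S.bL) (z : M) {u v : L} (h : α.rel u v) :
    extendRel α (z ⊓ u) (z ⊓ v) := by
  by_cases hz : z ∈ L
  · exact Or.inr ⟨⟨z, hz⟩ ⊓ u, ⟨z, hz⟩ ⊓ v, rfl, rfl, α.inf (α.refl _) h⟩
  have hzb := (S.lt_and_lt_of_not_mem hz).2.le
  by_cases hbu : S.bL ≤ u <;> by_cases hbv : S.bL ≤ v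
  · left
    rw [inf_eq_left.mpr (hzb.trans (show b ≤ (u : M) from hbu)),
      inf_eq_left.mpr (hzb.trans (show b ≤ (v : M) from hbv))]
  · exact absurd (S.rel_aL_bL_of_rel_of_bL_le hcga α h hbu hbv) hα
  · exact absurd (S.rel_aL_bL_of_rel_of_bL_le hcga α (α.symm h) hbv hbu) hα
  · right
    refine ⟨S.aL ⊓ u, S.aL ⊓ v, ?_, ?_, α.inf (α.refl _) h⟩
    · exact (S.inf_eq_left_inf hz u.2 hbu).symm
    · exact (S.inf_eq_left_inf hz v.2 hbv).symm

theorem extendRel_sup (hcgb : ∀ y : L, S.bL < y → ∀ u v : L, latCg S.bL y u v)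
    (α : LatCon L) (hα : ¬ α.rel S.aL S.bL) {x₁ y₁ x₂ y₂ : M} (h₁ : extendRel α x₁ y₁)
    (h₂ : extendRel α x₂ y₂) : extendRel α (x₁ ⊔ x₂) (y₁ ⊔ y₂) := by
  rcases h₁ with rfl | ⟨u₁, v₁, rfl, rfl, h₁⟩ <;> rcases h₂ with rfl | ⟨u₂, v₂, rfl, rfl, h₂⟩
  · exact Or.inl rfl
  · exact S.extendRel_sup_left hcgb α hα _ h₂
  · rw [sup_comm (u₁ : M), sup_comm (v₁ : M)]
    exact S.extendRel_sup_left hcgb α hα _ h₁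
  · exact Or.inr ⟨u₁ ⊔ u₂, v₁ ⊔ v₂, rfl, rfl, α.sup h₁ h₂⟩

theorem extendRel_inf (hcga : ∀ x : L, x < S.aL → ∀ u v : L, latCg x S.aL u v)
    (α : LatCon L) (hα : ¬ α.rel S.aL S.bL) {x₁ y₁ x₂ y₂ : M} (h₁ : extendRel α x₁ y₁)
    (h₂ : extendRel α x₂ y₂) : extendRel α (x₁ ⊓ x₂) (y₁ ⊓ y₂) := by
  rcases h₁ with rfl | ⟨u₁, v₁, rfl, rfl, h₁⟩ <;> rcases h₂ with rfl | ⟨u₂, v₂, rfl, rfl, h₂⟩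
  · exact Or.inl rfl
  · exact S.extendRel_inf_left hcga α hα _ h₂
  · rw [inf_comm (u₁ : M), inf_comm (v₁ : M)]
    exact S.extendRel_inf_left hcga α hα _ h₁
  · exact Or.inr ⟨u₁ ⊓ u₂, v₁ ⊓ v₂, rfl, rfl, α.inf h₁ h₂⟩

theorem exists_extension_of_not_rel (hcga : ∀ x : L, x < S.aL → ∀ u v : L, latCg x S.aL u v)
    (hcgb : ∀ y : L, S.bL < y → ∀ u v : L, latCg S.bL y u v) (α : LatCon L)
    (hα : ¬ α.rel S.aL S.bL) : ∃ Θ : LatCon M, ∀ u v : L, Θ.rel u v ↔ α.rel u v := by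
  let Θ : LatCon M :=
    { rel := extendRel α
      refl := fun _ => Or.inl rfl
      symm := extendRel_symm α
      trans := extendRel_trans α
      sup := S.extendRel_sup hcgb α hα
      inf := S.extendRel_inf hcga α hα }
  refine ⟨Θ, fun u v => ⟨?_, fun h => Or.inr ⟨u, v, rfl, rfl, h⟩⟩⟩
  rintro (huv | ⟨u', v', hu, hv, h⟩)
  · exact Subtype.ext huv ▸ α.refl u
  · rwa [Subtype.ext hu, Subtype.ext hv] at h

theorem hasCongruenceExtension (hcga : ∀ x : L, x < S.aL → ∀ u v : L, latCg x S.aL u v)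
    (hcgb : ∀ y : L, S.bL < y → ∀ u v : L, latCg S.bL y u v) : L.HasCongruenceExtension :=
  fun α => (em (α.rel S.aL S.bL)).elim (S.exists_extension_of_rel α)
    (S.exists_extension_of_not_rel hcga hcgb α)

theorem rel_of_rel_of_not_mem_left (hK : IsSimpleLat (Set.Icc a b)) (Θ : LatCon M) {x y : M}
    (h : Θ.rel x y) (hx : x ∉ L) (hxy : x < y) : Θ.rel a b := by
  obtain ⟨hax, hxb⟩ := S.lt_and_lt_of_not_mem hx
  have hne : x ≠ y ⊓ b := by
    by_cases hy : y ∈ L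
    · rw [inf_eq_right.mpr (S.right_le_of_le hx hy hxy.le)]
      exact hxb.ne
    · rw [inf_eq_left.mpr (S.lt_and_lt_of_not_mem hy).2.le]
      exact hxy.ne
  have hrel : Θ.rel x (y ⊓ b) := by
    simpa only [inf_eq_left.mpr hxb.le] using Θ.rel_inf_right h b
  exact Θ.rel_of_isSimpleLat_Icc hK hrel ⟨hax.le, hxb.le⟩
    ⟨le_inf (hax.trans hxy).le S.lt.le, inf_le_right⟩ hne

theorem rel_of_rel_of_not_mem_right (hK : IsSimpleLat (Set.Icc a b)) (Θ : LatCon M) {x y : M}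
    (h : Θ.rel x y) (hy : y ∉ L) (hxy : x < y) : Θ.rel a b := by
  obtain ⟨hay, hyb⟩ := S.lt_and_lt_of_not_mem hy
  have hne : x ⊔ a ≠ y := by
    by_cases hx : x ∈ L
    · rw [sup_eq_right.mpr (S.le_left_of_le hy hx hxy.le)]
      exact hay.ne
    · rw [sup_eq_left.mpr (S.lt_and_lt_of_not_mem hx).1.le]
      exact hxy.ne
  have hrel : Θ.rel (x ⊔ a) y := by
    simpa only [sup_eq_left.mpr hay.le] using Θ.rel_sup_right h a
  exact Θ.rel_of_isSimpleLat_Icc hK hrel ⟨le_sup_right, sup_le (hxy.trans hyb).le S.lt.le⟩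
    ⟨hay.le, hyb.le⟩ hne

theorem rel_iff_rel_lower_upper (hK : IsSimpleLat (Set.Icc a b)) (Θ : LatCon M) {x y : M}
    (hxy : x < y) : Θ.rel x y ↔ Θ.rel (S.lower x) (S.upper y) := by
  refine ⟨fun h => ?_, fun h => Θ.rel_of_le_of_le h (S.lower_le x) hxy.le (S.le_upper y)⟩
  have hx : Θ.rel (S.lower x) x := by
    by_cases hxL : x ∈ L
    · rw [S.lower_of_mem hxL]
      exact Θ.refl x
    · obtain ⟨hax, hxb⟩ := S.lt_and_lt_of_not_mem hxL
      rw [S.lower_of_not_mem hxL]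
      exact Θ.rel_of_le_of_le (S.rel_of_rel_of_not_mem_left hK Θ h hxL hxy) le_rfl hax.le hxb.le
  have hy : Θ.rel y (S.upper y) := by
    by_cases hyL : y ∈ L
    · rw [S.upper_of_mem hyL]
      exact Θ.refl y
    · obtain ⟨hay, hyb⟩ := S.lt_and_lt_of_not_mem hyL
      rw [S.upper_of_not_mem hyL]
      exact Θ.rel_of_le_of_le (S.rel_of_rel_of_not_mem_right hK Θ h hyL hxy) hay.le hyb.le le_rfl
  exact Θ.trans hx (Θ.trans h hy)

theorem exists_latCg_eq (hK : IsSimpleLat (Set.Icc a b)) {x y : M} (hxy : x ≤ y) :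
    ∃ c d : L, c ≤ d ∧ latCg x y = latCg (c : M) d := by
  rcases hxy.eq_or_lt with rfl | hlt
  · exact ⟨S.aL, S.aL, le_rfl, latCg_eq_latCg fun Θ => iff_of_true (Θ.refl _) (Θ.refl _)⟩
  · exact ⟨S.lower x, S.upper y, (S.lower_le x).trans (hxy.trans (S.le_upper y)),
      latCg_eq_latCg (S.rel_iff_rel_lower_upper hK · hlt)⟩

end IsInsertion

theorem princ_iso_of_insertion_general {M : Type*} [Lattice M] (a b : M) (L : Sublattice M)
    (hab : a < b) (haL : a ∈ L) (hbL : b ∈ L)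
    (hUnion : ∀ x : M, x ∈ L ∨ x ∈ Set.Icc a b)
    (hInter : (L : Set M) ∩ Set.Icc a b = {a, b})
    (horder : ∀ k ∈ Set.Icc a b, ∀ l ∈ (L : Set M) \ Set.Icc a b,
      (k ≤ l ↔ b ≤ l ∨ (k = a ∧ a ≤ l)) ∧ (l ≤ k ↔ l ≤ a ∨ (k = b ∧ l ≤ b)))
    (hKsimple : IsSimpleLat ↥(Set.Icc a b))
    (hcga : ∀ x : ↥L, x < ⟨a, haL⟩ → ∀ u v : ↥L, latCg x ⟨a, haL⟩ u v)
    (hcgb : ∀ y : ↥L, (⟨b, hbL⟩ : ↥L) < y → ∀ u v : ↥L, latCg (⟨b, hbL⟩ : ↥L) y u v) :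
    Nonempty (Princ M ≃o Princ ↥L) := by
  have S : IsInsertion a b L := ⟨hab, haL, hbL, hUnion, hInter, horder⟩
  exact ⟨Princ.orderIsoOfSublattice (S.hasCongruenceExtension hcga hcgb)
    fun _ _ => S.exists_latCg_eq hKsimple⟩

/-- **Lemma.** (Insertion setup:) `M` is a lattice, `a < b` in `M`, `K = [a,b]` is the
interval of `M`, and `L` is a sublattice of `M` with `M = L ∪ K`, `L ∩ K = {a,b}`,
`b` covering `a` in `L`, and the comparabilities between `K` and `L \ K` as described.
If `K` is simple and, in `L`, `cg(x,a) = ∇` for all `x < a` and `cg(b,y) = ∇` for all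
`b < y`, then `Princ M` is order-isomorphic to `Princ L`. -/
theorem princ_iso_of_insertion {M : Type*} [Lattice M] (a b : M) (L : Sublattice M)
    (hab : a < b) (haL : a ∈ L) (hbL : b ∈ L)
    (hUnion : ∀ x : M, x ∈ L ∨ x ∈ Set.Icc a b)
    (hInter : (L : Set M) ∩ Set.Icc a b = {a, b})
    (hcov : ∀ l ∈ L, ¬(a < l ∧ l < b))
    (horder : ∀ k ∈ Set.Icc a b, ∀ l ∈ (L : Set M) \ Set.Icc a b,
      (k ≤ l ↔ b ≤ l ∨ (k = a ∧ a ≤ l)) ∧ (l ≤ k ↔ l ≤ a ∨ (k = b ∧ l ≤ b)))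
    (hKsimple : IsSimpleLat ↥(Set.Icc a b))
    (hcga : ∀ x : ↥L, x < ⟨a, haL⟩ → ∀ u v : ↥L, latCg x ⟨a, haL⟩ u v)
    (hcgb : ∀ y : ↥L, (⟨b, hbL⟩ : ↥L) < y → ∀ u v : ↥L, latCg (⟨b, hbL⟩ : ↥L) y u v) :
    Nonempty (Princ M ≃o Princ ↥L) :=
  princ_iso_of_insertion_general a b L hab haL hbL hUnion hInter horder hKsimple hcga hcgb
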